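/- For x ∈ Γ_k^+ ⊂ ℝ^n (i.e. σ_i(x) > 0 for all 1 ≤ i ≤ k) with k < n, the inequality σ_1(x)·σ_k(x) - (k+1)·σ_{k+1}(x) ≥ (k / C(n,k)^{1/k}) · σ_k(x)^{1 + 1/k} holds, where C(n,k) is the binomial coefficient. -/

import Mathlib

open Finset Polynomial


/-- The `k`-th elementary symmetric polynomial of `x : Fin n → ℝ`. -/
def esymm (n k : ℕ) (x : Fin n → ℝ) : ℝ :=
  ∑ s ∈ (Finset.univ : Finset (Fin n)).powersetCard k, ∏ i ∈ s, x i

lemma esymm_zero (n : ℕ) (x : Fin n → ℝ) : esymm n 0 x = 1 := by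
  simp [esymm]

lemma esymm_one' (n : ℕ) (x : Fin n → ℝ) : esymm n 1 x = ∑ i, x i := by
  simp [esymm, Finset.powersetCard_one]

lemma esymm_self (n : ℕ) (x : Fin n → ℝ) : esymm n n x = ∏ i, x i := by
  have : (Finset.univ : Finset (Fin n)).powersetCard n = {Finset.univ} := by
    simpa using Finset.powersetCard_self (Finset.univ : Finset (Fin n))
  simp [esymm, this]

lemma esymm_eq_multiset (n k : ℕ) (x : Fin n → ℝ) :
    esymm n k x = (Multiset.map x Finset.univ.val).esymm k := by
  rw [Finset.esymm_map_val]; rfl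

lemma sum_powersetCard_compl (n j : ℕ) (hj : j ≤ n) (f : Finset (Fin n) → ℝ) :
    ∑ s ∈ (Finset.univ : Finset (Fin n)).powersetCard j, f sᶜ
      = ∑ s ∈ (Finset.univ : Finset (Fin n)).powersetCard (n - j), f s := by
  refine Finset.sum_nbij' (fun s => sᶜ) (fun s => sᶜ) ?_ ?_ ?_ ?_ ?_
  · intro s hs
    rw [Finset.mem_powersetCard_univ] at hs ⊢
    rw [Finset.card_compl, hs, Fintype.card_fin]
  · intro s hs
    rw [Finset.mem_powersetCard_univ] at hs ⊢
    rw [Finset.card_compl, hs, Fintype.card_fin]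
    omega
  · intro s _; exact compl_compl s
  · intro s _; exact compl_compl s
  · intro s _; rfl

lemma sq_sum_eq {ι : Type*} [DecidableEq ι] (s : Finset ι) (g : ι → ℝ) :
    (∑ i ∈ s, g i) ^ 2 = ∑ i ∈ s, g i ^ 2 + 2 * ∑ T ∈ s.powersetCard 2, ∏ i ∈ T, g i := by
  induction s using Finset.cons_induction with
  | empty =>
      rw [show (∅ : Finset ι).powersetCard 2 = ∅ from Finset.powersetCard_eq_empty.mpr (by simp)]
      simp
  | cons a s ha ih =>
    rw [Finset.sum_cons, Finset.sum_cons, Finset.cons_eq_insert,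
      Finset.powersetCard_succ_insert ha, Finset.sum_union ?hd, Finset.sum_image ?hi]
    case hd =>
      rw [Finset.disjoint_left]
      intro T hT hT2
      obtain ⟨U, hU, rfl⟩ := Finset.mem_image.mp hT2
      have : a ∈ insert a U := Finset.mem_insert_self _ _
      have haT : a ∉ (insert a U) := fun h => ha ((Finset.mem_powersetCard.mp hT).1 h)
      exact haT this
    case hi =>
      intro T hT U hU h
      have hTa : a ∉ T := fun h' => ha ((Finset.mem_powersetCard.mp hT).1 h')
      have hUa : a ∉ U := fun h' => ha ((Finset.mem_powersetCard.mp hU).1 h')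
      have : (insert a T).erase a = (insert a U).erase a := by rw [h]
      rwa [Finset.erase_insert hTa, Finset.erase_insert hUa] at this
    · have h1 : ∀ T ∈ s.powersetCard 1, ∏ i ∈ insert a T, g i = g a * ∏ i ∈ T, g i := by
        intro T hT
        have hTa : a ∉ T := fun h' => ha ((Finset.mem_powersetCard.mp hT).1 h')
        rw [Finset.prod_insert hTa]
      rw [Finset.sum_congr rfl h1, ← Finset.mul_sum]
      have h2 : ∑ T ∈ s.powersetCard 1, ∏ i ∈ T, g i = ∑ i ∈ s, g i := by
        rw [Finset.powersetCard_one, Finset.sum_map]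
        simp
      rw [h2]
      ring_nf
      nlinarith [ih]

lemma exists_tuple (n : ℕ) (t : Multiset ℝ) (h : Multiset.card t = n) :
    ∃ y : Fin n → ℝ, Multiset.map y Finset.univ.val = t := by
  obtain ⟨l, rfl⟩ : ∃ l : List ℝ, (l : Multiset ℝ) = t := ⟨t.toList, t.coe_toList⟩
  have hl : l.length = n := by simpa using h
  subst hl
  exact ⟨l.get, by rw [Fin.univ_val_map, List.ofFn_get]⟩

lemma exists_deriv (n : ℕ) (x : Fin (n + 1) → ℝ) :
    ∃ y : Fin n → ℝ, ∀ i : ℕ, i ≤ n →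
      ((n : ℝ) + 1) * esymm n i y = (((n : ℝ) + 1) - i) * esymm (n + 1) i x := by
  classical
  set s : Multiset ℝ := Multiset.map x Finset.univ.val with hs
  have hcs : Multiset.card s = n + 1 := by simp [hs]
  set P : ℝ[X] := (s.map fun r => X - C r).prod with hP
  have hPdeg : P.natDegree = n + 1 := by
    rw [hP, natDegree_multiset_prod_X_sub_C_eq_card, hcs]
  have hProots : P.roots = s := roots_multiset_prod_X_sub_C s
  have hPmonic : P.Monic := monic_multiset_prod_of_monic _ _ fun a _ => monic_X_sub_C a
  have hPcoeff : ∀ m : ℕ, m ≤ n + 1 → P.coeff m = (-1) ^ (n + 1 - m) * s.esymm (n + 1 - m) := by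
    intro m hm
    rw [hP, Multiset.prod_X_sub_C_coeff s (by rw [hcs]; exact hm), hcs]
  set Q := derivative P with hQ
  have hQtop : Q.coeff n = (n : ℝ) + 1 := by
    rw [hQ, coeff_derivative]
    have h1 : P.coeff (n + 1) = 1 := by
      have := hPmonic.leadingCoeff
      rwa [Polynomial.leadingCoeff, hPdeg] at this
    rw [h1]; push_cast; ring
  have hQne : Q ≠ 0 := fun h => by
    rw [h] at hQtop; simp at hQtop
    exact Nat.cast_add_one_ne_zero n hQtop.symm
  have hQdeg : Q.natDegree = n := by
    refine le_antisymm ?_ (le_natDegree_of_ne_zero (by rw [hQtop]; positivity))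
    have h2 : Q.natDegree < P.natDegree :=
      Polynomial.natDegree_derivative_lt (by rw [hPdeg]; omega)
    omega
  have hQcard : Multiset.card Q.roots = n := by
    refine le_antisymm (hQdeg ▸ Q.card_roots') ?_
    have h3 := P.card_roots_le_derivative
    rw [hProots, hcs, ← hQ] at h3
    omega
  obtain ⟨y, hy⟩ := exists_tuple n Q.roots hQcard
  refine ⟨y, fun i hi => ?_⟩
  have hQlead : Q.leadingCoeff = (n : ℝ) + 1 := by
    rw [Polynomial.leadingCoeff, hQdeg, hQtop]
  have e1 : Q.coeff (n - i) = ((n : ℝ) + 1) * (-1) ^ i * Q.roots.esymm i := by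
    have h4 := Polynomial.coeff_eq_esymm_roots_of_card
      (by rw [hQcard, hQdeg] : Multiset.card Q.roots = Q.natDegree)
      (by rw [hQdeg]; omega : n - i ≤ Q.natDegree)
    rwa [hQlead, hQdeg, show n - (n - i) = i by omega] at h4
  have e2 : Q.coeff (n - i) = (-1) ^ i * s.esymm i * ((n + 1 - i : ℕ) : ℝ) := by
    rw [hQ, coeff_derivative, show n - i + 1 = n + 1 - i by omega,
      hPcoeff (n + 1 - i) (by omega), show n + 1 - (n + 1 - i) = i by omega]
    push_cast [show n + 1 - i = n - i + 1 by omega]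
    ring
  have E : ((n : ℝ) + 1) * (-1) ^ i * Q.roots.esymm i
      = (-1) ^ i * s.esymm i * ((n + 1 - i : ℕ) : ℝ) := by rw [← e1, e2]
  have hy2 : esymm n i y = Q.roots.esymm i := by rw [esymm_eq_multiset, hy]
  have hx2 : esymm (n + 1) i x = s.esymm i := by rw [esymm_eq_multiset, hs]
  have hcast : ((n + 1 - i : ℕ) : ℝ) = ((n : ℝ) + 1) - i := by
    rw [Nat.cast_sub (by omega)]; push_cast; ring
  rw [hy2, hx2, ← hcast]
  rcases neg_one_pow_eq_or ℝ i with h | h <;> rw [h] at E <;> linarith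

noncomputable def pfun (n j : ℕ) (x : Fin n → ℝ) : ℝ := esymm n j x / (n.choose j)

lemma newton_base (m : ℕ) (hm : 2 ≤ m) (x : Fin m → ℝ) :
    pfun m (m - 2) x * pfun m m x ≤ pfun m (m - 1) x ^ 2 := by
  classical
  set Pi : Fin m → ℝ := fun i => ∏ l ∈ ({i} : Finset (Fin m))ᶜ, x l with hPi
  have f1 : esymm m (m - 1) x = ∑ i, Pi i := by
    have := sum_powersetCard_compl m 1 (by omega) (fun s => ∏ i ∈ s, x i)
    rw [esymm, ← this, Finset.powersetCard_one, Finset.sum_map]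
    rfl
  have key : ∀ T ∈ (Finset.univ : Finset (Fin m)).powersetCard 2,
      (∏ i ∈ Tᶜ, x i) * ∏ i, x i = ∏ i ∈ T, Pi i := by
    intro T hT
    rw [Finset.mem_powersetCard_univ] at hT
    obtain ⟨i, j, hij, rfl⟩ := Finset.card_eq_two.mp hT
    have hPii : Pi i = x j * ∏ l ∈ ({i, j} : Finset (Fin m))ᶜ, x l := by
      show (∏ l ∈ ({i} : Finset (Fin m))ᶜ, x l) = _
      have : ({i} : Finset (Fin m))ᶜ = insert j (({i, j} : Finset (Fin m))ᶜ) := by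
        ext a
        by_cases h : a = j
        · subst h; simp [hij.symm]
        · simp [h]
      rw [this, Finset.prod_insert (by simp)]
    have hPij : Pi j = x i * ∏ l ∈ ({i, j} : Finset (Fin m))ᶜ, x l := by
      show (∏ l ∈ ({j} : Finset (Fin m))ᶜ, x l) = _
      have : ({j} : Finset (Fin m))ᶜ = insert i (({i, j} : Finset (Fin m))ᶜ) := by
        ext a
        by_cases h : a = i
        · subst h; simp [hij]
        · simp [h]
      rw [this, Finset.prod_insert (by simp)]
    have hprod : ∏ l, x l = (∏ l ∈ ({i, j} : Finset (Fin m))ᶜ, x l) * (x i * x j) := by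
      rw [← Finset.prod_compl_mul_prod ({i, j} : Finset (Fin m)) x,
        Finset.prod_pair hij]
    rw [Finset.prod_pair hij, hPii, hPij, hprod]; ring
  have f2 : esymm m (m - 2) x * esymm m m x
      = ∑ T ∈ (Finset.univ : Finset (Fin m)).powersetCard 2, ∏ i ∈ T, Pi i := by
    have hc := sum_powersetCard_compl m 2 (by omega) (fun s => ∏ i ∈ s, x i)
    rw [esymm_self, esymm, ← hc, Finset.sum_mul]
    exact Finset.sum_congr rfl key
  have f3 := sq_sum_eq (Finset.univ : Finset (Fin m)) Pi
  have f4 : (∑ i, Pi i) ^ 2 ≤ (m : ℝ) * ∑ i, Pi i ^ 2 := by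
    have := sq_sum_le_card_mul_sum_sq (s := (Finset.univ : Finset (Fin m))) (f := Pi)
    simpa using this
  -- now the arithmetic
  rw [pfun, pfun, pfun, Nat.choose_self, Nat.choose_symm hm,
    Nat.choose_symm (show 1 ≤ m by omega), Nat.choose_one_right,
    div_mul_div_comm, f2, f1, Nat.cast_one, mul_one, Nat.cast_choose_two]
  have hm' : (2 : ℝ) ≤ (m : ℝ) := by exact_mod_cast hm
  have hT : ∑ T ∈ (Finset.univ : Finset (Fin m)).powersetCard 2, ∏ i ∈ T, Pi i
      = ((∑ i, Pi i) ^ 2 - ∑ i, Pi i ^ 2) / 2 := by linarith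
  rw [hT, div_pow, div_le_div_iff₀ (by nlinarith) (by nlinarith)]
  nlinarith [f4]

theorem newton (n : ℕ) : ∀ (x : Fin n → ℝ) (j : ℕ), 1 ≤ j → j + 1 ≤ n →
    pfun n (j - 1) x * pfun n (j + 1) x ≤ pfun n j x ^ 2 := by
  induction n using Nat.strong_induction_on with
  | _ n IH =>
    intro x j hj hjn
    by_cases hcase : j + 1 = n
    · have hb := newton_base n (by omega) x
      rw [show n - 2 = j - 1 by omega, show n - 1 = j by omega] at hb
      rwa [show pfun n n x = pfun n (j + 1) x from congrArg (fun t => pfun n t x) hcase.symm] at hb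
    · obtain ⟨m, rfl⟩ : ∃ m, n = m + 1 := ⟨n - 1, by omega⟩
      obtain ⟨y, hy⟩ := exists_deriv m x
      have transfer : ∀ i : ℕ, i ≤ m → pfun m i y = pfun (m + 1) i x := by
        intro i hi
        have h1 := hy i hi
        have hI : (m + 1).choose i * (m + 1 - i) = (m + 1) * m.choose i := by
          rw [← Nat.choose_mul_succ_eq]; ring
        have hcast : ((m + 1).choose i : ℝ) * (((m : ℝ) + 1) - i) = ((m : ℝ) + 1) * (m.choose i : ℝ) := by
          have := congrArg (fun t : ℕ => (t : ℝ)) hI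
          push_cast [Nat.cast_sub (show i ≤ m + 1 by omega)] at this
          linarith [this]
        rw [pfun, pfun, div_eq_div_iff
          (by exact_mod_cast (Nat.choose_pos (by omega : i ≤ m)).ne')
          (by exact_mod_cast (Nat.choose_pos (by omega : i ≤ m + 1)).ne')]
        refine mul_left_cancel₀ (show ((m : ℝ) + 1) ≠ 0 by positivity) ?_
        push_cast
        linear_combination ((m + 1).choose i : ℝ) * h1 + esymm (m + 1) i x * hcast
      have IH' := IH m (by omega) y j hj (by omega)
      rw [transfer (j - 1) (by omega), transfer (j + 1) (by omega), transfer j (by omega)] at IH'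
      exact IH'

theorem sigma_one_sigma_k_inequality (n k : ℕ) (x : Fin n → ℝ)
    (hk : 1 ≤ k) (hkn : k < n)
    (hΓ : ∀ i : ℕ, 1 ≤ i → i ≤ k → 0 < esymm n i x) :
    esymm n 1 x * esymm n k x - (k + 1 : ℝ) * esymm n (k + 1) x ≥
      ((k : ℝ) / (n.choose k : ℝ) ^ ((1 : ℝ) / k)) *
        esymm n k x ^ (1 + (1 : ℝ) / k) := by
  have hpos : ∀ i, 1 ≤ i → i ≤ k → 0 < pfun n i x := fun i h1 h2 =>
    div_pos (hΓ i h1 h2) (by exact_mod_cast Nat.choose_pos (by omega))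
  have hP0 : pfun n 0 x = 1 := by simp [pfun, esymm_zero]
  have hpos' : ∀ i, i ≤ k → 0 < pfun n i x := by
    intro i hi
    rcases Nat.eq_zero_or_pos i with rfl | h
    · rw [hP0]; norm_num
    · exact hpos i h hi
  have rstep : ∀ j, 1 ≤ j → j + 1 ≤ k →
      pfun n (j + 1) x / pfun n j x ≤ pfun n j x / pfun n (j - 1) x := by
    intro j h1 h2
    have hN := newton n x j h1 (by omega)
    have p1 : 0 < pfun n (j - 1) x := hpos' _ (by omega)
    have p2 : 0 < pfun n j x := hpos' _ (by omega)
    rw [div_le_div_iff₀ p2 p1]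
    nlinarith [hN]
  have mono : ∀ a b, 1 ≤ a → a ≤ b → b ≤ k →
      pfun n b x / pfun n (b - 1) x ≤ pfun n a x / pfun n (a - 1) x := by
    intro a b ha hab
    induction b, hab using Nat.le_induction with
    | base => intro _; exact le_rfl
    | succ b hab IH =>
      intro hbk
      have h1 := rstep b (by omega) (by omega)
      have h2 := IH (by omega)
      rw [show b + 1 - 1 = b from rfl]
      exact le_trans h1 h2
  have tel : ∀ m, m ≤ k →
      pfun n m x = ∏ t ∈ Finset.range m, (pfun n (t + 1) x / pfun n t x) := by
    intro m
    induction m with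
    | zero => intro _; simpa using hP0
    | succ m IHm =>
      intro h
      rw [Finset.prod_range_succ, ← IHm (by omega)]
      have hm : pfun n m x ≠ 0 := (hpos' m (by omega)).ne'
      field_simp
  have htel := tel k (le_refl k)
  set B := pfun n k x with hB
  set rk := pfun n k x / pfun n (k - 1) x with hrk
  have hrkpos : 0 < rk := div_pos (hpos' k le_rfl) (hpos' (k - 1) (by omega))
  have claimB : rk ^ k ≤ B := by
    rw [hB, tel k le_rfl]
    rw [show rk ^ k = ∏ t ∈ Finset.range k, rk by rw [Finset.prod_const]; simp]
    refine Finset.prod_le_prod (fun t _ => le_of_lt hrkpos) ?_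
    intro t ht
    rw [Finset.mem_range] at ht
    have := mono (t + 1) k (by omega) (by omega) le_rfl
    rwa [show t + 1 - 1 = t from rfl] at this
  have claimA : B ≤ pfun n 1 x ^ k := by
    rw [hB, tel k le_rfl]
    rw [show pfun n 1 x ^ k = ∏ t ∈ Finset.range k, pfun n 1 x by rw [Finset.prod_const]; simp]
    refine Finset.prod_le_prod ?_ ?_
    · intro t ht
      rw [Finset.mem_range] at ht
      exact le_of_lt (div_pos (hpos' (t + 1) (by omega)) (hpos' t (by omega)))
    · intro t ht
      rw [Finset.mem_range] at ht
      have := mono 1 (t + 1) le_rfl (by omega) (by omega)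
      rw [show t + 1 - 1 = t from rfl] at this
      simpa [hP0] using this
  have hBpos : 0 < B := hpos' k le_rfl
  have hkR : (0 : ℝ) < k := by exact_mod_cast hk
  have hrB : rk ≤ B ^ ((1 : ℝ) / k) := by
    have h1 : rk = (rk ^ k) ^ ((1 : ℝ) / k) := by
      rw [← Real.rpow_natCast rk k, ← Real.rpow_mul (le_of_lt hrkpos)]
      rw [mul_one_div, div_self (ne_of_gt hkR), Real.rpow_one]
    rw [h1]
    exact Real.rpow_le_rpow (pow_nonneg (le_of_lt hrkpos) k) claimB (by positivity)
  have hA : B ^ ((1 : ℝ) / k) ≤ pfun n 1 x := by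
    have h1 : pfun n 1 x = (pfun n 1 x ^ k) ^ ((1 : ℝ) / k) := by
      rw [← Real.rpow_natCast _ k, ← Real.rpow_mul (le_of_lt (hpos 1 le_rfl hk))]
      rw [mul_one_div, div_self (ne_of_gt hkR), Real.rpow_one]
    rw [h1]
    exact Real.rpow_le_rpow (le_of_lt hBpos) claimA (by positivity)
  have claimC : pfun n (k + 1) x ≤ B * rk := by
    have hN := newton n x k hk (by omega)
    have p1 : 0 < pfun n (k - 1) x := hpos' _ (by omega)
    rw [hrk, hB, mul_div_assoc']
    rw [le_div_iff₀ p1]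
    nlinarith [hN]
  have hD : pfun n (k + 1) x ≤ B * B ^ ((1 : ℝ) / k) :=
    le_trans claimC (by nlinarith [hrB, hBpos])
  -- convert esymm to pfun
  have ee : ∀ j, j ≤ n → esymm n j x = (n.choose j : ℝ) * pfun n j x := by
    intro j hj
    rw [pfun, mul_div_cancel₀]
    exact_mod_cast (Nat.choose_pos hj).ne'
  rw [ee 1 (by omega), ee k (by omega), ee (k + 1) (by omega), Nat.choose_one_right]
  set A := pfun n 1 x with hA'
  set D := pfun n (k + 1) x with hD'
  set C : ℝ := (n.choose k : ℝ) with hC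
  set C' : ℝ := (n.choose (k + 1) : ℝ) with hC'
  have hCpos : 0 < C := by rw [hC]; exact_mod_cast Nat.choose_pos (by omega)
  have hC'nonneg : 0 ≤ C' := by rw [hC']; positivity
  have hid : ((k : ℝ) + 1) * C' = ((n : ℝ) - k) * C := by
    have h1 := Nat.choose_succ_right_eq n k
    have h2 := congrArg (fun t : ℕ => (t : ℝ)) h1
    push_cast [Nat.cast_sub (le_of_lt hkn)] at h2
    linarith [h2]
  -- RHS equality
  have hrpow1 : (C * B) ^ (1 + (1 : ℝ) / k) = (C * C ^ ((1 : ℝ) / k)) * (B * B ^ ((1 : ℝ) / k)) := by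
    rw [Real.mul_rpow (le_of_lt hCpos) (le_of_lt hBpos),
      Real.rpow_add hCpos, Real.rpow_add hBpos, Real.rpow_one, Real.rpow_one]
  have hCk : C ^ ((1 : ℝ) / k) ≠ 0 := ne_of_gt (Real.rpow_pos_of_pos hCpos _)
  have hRHS : ((k : ℝ) / C ^ ((1 : ℝ) / k)) * (C * B) ^ (1 + (1 : ℝ) / k)
      = (k : ℝ) * C * (B * B ^ ((1 : ℝ) / k)) := by
    rw [hrpow1]
    field_simp
  rw [hRHS, ge_iff_le]
  -- main bounds
  have hnk : (0 : ℝ) ≤ (n : ℝ) - k := by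
    have : (k : ℝ) ≤ n := by exact_mod_cast le_of_lt hkn
    linarith
  have G1 : (n : ℝ) * C * (B * B ^ ((1 : ℝ) / k)) ≤ (n : ℝ) * A * (C * B) := by
    have h := mul_le_mul_of_nonneg_left hA (show (0 : ℝ) ≤ (n : ℝ) * C * B by positivity)
    nlinarith [h]
  have G2 : ((k : ℝ) + 1) * (C' * D) ≤ ((n : ℝ) - k) * C * (B * B ^ ((1 : ℝ) / k)) := by
    have h3 : C' * D ≤ C' * (B * B ^ ((1 : ℝ) / k)) := by
      rcases eq_or_lt_of_le hC'nonneg with h | h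
      · rw [← h]; simp
      · exact (mul_le_mul_iff_right₀ h).mpr hD
    calc ((k : ℝ) + 1) * (C' * D) ≤ ((k : ℝ) + 1) * (C' * (B * B ^ ((1 : ℝ) / k))) := by
          have : (0 : ℝ) < (k : ℝ) + 1 := by positivity
          exact (mul_le_mul_iff_right₀ this).mpr h3
      _ = ((n : ℝ) - k) * C * (B * B ^ ((1 : ℝ) / k)) := by
          rw [← mul_assoc, hid]
  linarith [G1, G2]
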